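/- Let S be a finite set of integers containing two distinct elements x₀ and x₁, and let S' = S \ {x₁}. If every subset sum is computed with x₁ aliased to x₀ (i.e., every occurrence of x₁ contributes value x₀), then the set of aliased subset sums equals Σ(S' ∪ {x₀'}) where x₀' is a duplicate of x₀, and its cardinality is at most |Σ(S \ {x₁})| + |Σ(S \ {x₀, x₁})|, which is at most (3/4)·2^{|S|}. -/
import Mathlib


def sumset (S : Finset ℤ) : Finset ℤ := S.powerset.image (fun T => T.sum id)

/-- The aliased sum of a subset `T` of `S`: every occurrence of `x₁` contributes `x₀`. -/
def aliasedSum (x₀ x₁ : ℤ) (T : Finset ℤ) : ℤ :=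
  if x₁ ∈ T then T.sum id - x₁ + x₀ else T.sum id

def aliasedSumset (S : Finset ℤ) (x₀ x₁ : ℤ) : Finset ℤ :=
  S.powerset.image (aliasedSum x₀ x₁)

lemma sumset_erase (S : Finset ℤ) (x : ℤ) (hx : x ∈ S) :
    sumset S = sumset (S.erase x) ∪ (sumset (S.erase x)).image (fun s => s + x) := by
  ext y
  simp only [sumset, Finset.mem_union, Finset.mem_image, Finset.mem_powerset]
  constructor
  · rintro ⟨T, hT, rfl⟩
    by_cases hxT : x ∈ T
    · right
      refine ⟨T.sum id - x, ⟨T.erase x, Finset.erase_subset_erase _ hT, ?_⟩, by ring⟩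
      have := Finset.sum_erase_add T id hxT
      simp only [id] at this ⊢
      omega
    · exact Or.inl ⟨T, Finset.subset_erase.mpr ⟨hT, hxT⟩, rfl⟩
  · rintro (⟨T, hT, rfl⟩ | ⟨s, ⟨T, hT, rfl⟩, rfl⟩)
    · exact ⟨T, hT.trans (Finset.erase_subset _ _), rfl⟩
    · have hxT : x ∉ T := fun h => (Finset.mem_erase.mp (hT h)).1 rfl
      refine ⟨insert x T, Finset.insert_subset hx (hT.trans (Finset.erase_subset _ _)), ?_⟩
      rw [Finset.sum_insert hxT]
      simp [add_comm]

lemma sumset_card_le (S : Finset ℤ) : (sumset S).card ≤ 2 ^ S.card := by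
  calc (sumset S).card ≤ S.powerset.card := Finset.card_image_le
  _ = 2 ^ S.card := Finset.card_powerset S

theorem controlled_aliasing (S : Finset ℤ) (x₀ x₁ : ℤ) (h0 : x₀ ∈ S) (h1 : x₁ ∈ S)
    (hne : x₀ ≠ x₁) :
    aliasedSumset S x₀ x₁ =
      sumset (S.erase x₁) ∪ (sumset (S.erase x₁)).image (fun s => s + x₀) ∧
    (aliasedSumset S x₀ x₁).card ≤
      (sumset (S.erase x₁)).card + (sumset ((S.erase x₁).erase x₀)).card ∧
    4 * ((sumset (S.erase x₁)).card + (sumset ((S.erase x₁).erase x₀)).card) ≤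
      3 * 2 ^ S.card := by
  have h0' : x₀ ∈ S.erase x₁ := Finset.mem_erase.mpr ⟨hne, h0⟩
  set A := sumset (S.erase x₁) with hA
  set B := sumset ((S.erase x₁).erase x₀) with hB
  have part1 : aliasedSumset S x₀ x₁ = A ∪ A.image (fun s => s + x₀) := by
    ext y
    simp only [aliasedSumset, hA, sumset, Finset.mem_union, Finset.mem_image,
      Finset.mem_powerset]
    constructor
    · rintro ⟨T, hT, rfl⟩
      by_cases hxT : x₁ ∈ T
      · right
        refine ⟨T.sum id - x₁, ⟨T.erase x₁, Finset.erase_subset_erase _ hT, ?_⟩, ?_⟩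
        · have := Finset.sum_erase_add T id hxT
          simp only [id] at this ⊢
          omega
        · simp [aliasedSum, hxT]
      · exact Or.inl ⟨T, Finset.subset_erase.mpr ⟨hT, hxT⟩, by simp [aliasedSum, hxT]⟩
    · rintro (⟨T, hT, rfl⟩ | ⟨s, ⟨T, hT, rfl⟩, rfl⟩)
      · have hxT : x₁ ∉ T := fun h => (Finset.mem_erase.mp (hT h)).1 rfl
        exact ⟨T, hT.trans (Finset.erase_subset _ _), by simp [aliasedSum, hxT]⟩
      · have hxT : x₁ ∉ T := fun h => (Finset.mem_erase.mp (hT h)).1 rfl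
        refine ⟨insert x₁ T, Finset.insert_subset h1 (hT.trans (Finset.erase_subset _ _)), ?_⟩
        have : x₁ ∈ insert x₁ T := Finset.mem_insert_self _ _
        simp only [aliasedSum, if_pos this, Finset.sum_insert hxT]
        simp only [id]
        ring
  refine ⟨part1, ?_, ?_⟩
  · have hAB : A = B ∪ B.image (fun s => s + x₀) := sumset_erase _ _ h0'
    have hsub : aliasedSumset S x₀ x₁ ⊆ A ∪ B.image (fun s => s + (x₀ + x₀)) := by
      rw [part1]
      intro y hy
      rcases Finset.mem_union.mp hy with h | h
      · exact Finset.mem_union_left _ h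
      · obtain ⟨s, hs, rfl⟩ := Finset.mem_image.mp h
        rw [hAB] at hs
        rcases Finset.mem_union.mp hs with h' | h'
        · apply Finset.mem_union_left
          rw [hAB]
          exact Finset.mem_union_right _ (Finset.mem_image_of_mem _ h')
        · obtain ⟨b, hb, rfl⟩ := Finset.mem_image.mp h'
          apply Finset.mem_union_right
          exact Finset.mem_image.mpr ⟨b, hb, by ring⟩
    calc (aliasedSumset S x₀ x₁).card ≤ (A ∪ B.image (fun s => s + (x₀ + x₀))).card :=
          Finset.card_le_card hsub
      _ ≤ A.card + (B.image (fun s => s + (x₀ + x₀))).card := Finset.card_union_le _ _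
      _ ≤ A.card + B.card := by have := Finset.card_image_le (s := B) (f := fun s => s + (x₀ + x₀)); omega
  · have hm : ((S.erase x₁).erase x₀).card + 1 = (S.erase x₁).card :=
      Finset.card_erase_add_one h0'
    have hn : (S.erase x₁).card + 1 = S.card := Finset.card_erase_add_one h1
    set m := ((S.erase x₁).erase x₀).card with hmdef
    have hAc : A.card ≤ 2 ^ (m + 1) := by rw [hm]; exact sumset_card_le _
    have hBc : B.card ≤ 2 ^ m := sumset_card_le _
    have : S.card = m + 2 := by omega
    rw [this]
    have : (3 : ℕ) * 2 ^ (m + 2) = 4 * (2 ^ (m + 1) + 2 ^ m) := by ring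
    rw [this]
    omega
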